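/- arXiv:2106.11943 — 2 statements merged into one kernel-verified Lean document; each statement's English description precedes it below -/
import Mathlib

section
/- Let P ⊆ ℝ^n be a compact convex set, h : ℝ^n → ℝ convex and differentiable, z ∈ P, and let v maximize ⟨-∇h(z), v - z⟩ over P and x* = argmin_{x ∈ P} h(x). If d = v - z and ⟨-∇h(z), d⟩ ≥ L‖d‖², then h(z) - h(z + d) ≥ (h(z) - h(x*))/2. -/
open scoped RealInnerProductSpace

theorem fw_boundary_step_halves_gap (n : ℕ) (P : Set (EuclideanSpace ℝ (Fin n)))
    (hPc : IsCompact P) (hPconv : Convex ℝ P)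
    (h : EuclideanSpace ℝ (Fin n) → ℝ)
    (g : EuclideanSpace ℝ (Fin n) → EuclideanSpace ℝ (Fin n))
    (hdiff : Differentiable ℝ h) (hgrad : ∀ x, HasGradientAt h (g x) x)
    (hconv : ∀ x y, h y ≥ h x + ⟪g x, y - x⟫)
    (L : ℝ) (hL : 0 < L)
    (hsmooth : ∀ x y, h y ≤ h x + ⟪g x, y - x⟫ + (L / 2) * ‖y - x‖ ^ 2)
    (z v xstar : EuclideanSpace ℝ (Fin n)) (hz : z ∈ P) (hv : v ∈ P) (hx : xstar ∈ P)
    (hmin : ∀ x ∈ P, h xstar ≤ h x)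
    (hvmax : ∀ u ∈ P, ⟪-g z, u - z⟫ ≤ ⟪-g z, v - z⟫)
    (d : EuclideanSpace ℝ (Fin n)) (hd : d = v - z)
    (hbig : ⟪-g z, d⟫ ≥ L * ‖d‖ ^ 2) :
    h z - h (z + d) ≥ (h z - h xstar) / 2 := by
  have hsm := hsmooth z (z + d)
  simp only [add_sub_cancel_left] at hsm
  -- gap bound: h z - h xstar ≤ ⟪-g z, d⟫
  have hcv := hconv z xstar
  have hgap : h z - h xstar ≤ ⟪-g z, d⟫ := by
    have h1 : ⟪-g z, xstar - z⟫ ≤ ⟪-g z, v - z⟫ := hvmax xstar hx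
    have h2 : h z - h xstar ≤ ⟪-g z, xstar - z⟫ := by
      have : ⟪-g z, xstar - z⟫ = -⟪g z, xstar - z⟫ := by
        rw [inner_neg_left]
      linarith
    rw [hd]; linarith
  have hnn : (0:ℝ) ≤ ‖d‖ ^ 2 := by positivity
  have hIP : ⟪-g z, d⟫ = -⟪g z, d⟫ := by rw [inner_neg_left]
  nlinarith [hbig, hsm, hgap, mul_nonneg hL.le hnn]
end

section
/- Let h : ℝ^n → ℝ be L-smooth and μ-strongly convex with minimizer x* over compact convex P of diameter D, z ∈ P with z ≠ x*, and suppose the chosen direction d at z satisfies ⟨-∇h(z), d⟩ ≥ (ρ/2) · ⟨-∇h(z), (x*-z)/‖x*-z‖⟩ for some ρ > 0, and the next iterate z⁺ satisfies h(z⁺) ≤ h(z + γ d) for all γ ≥ 0. Then h(z⁺) - h(x*) ≤ (1 - (ρ/D)² · μ/(4L)) (h(z) - h(x*)). -/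
open scoped RealInnerProductSpace

set_option maxHeartbeats 1000000

theorem good_step_linear_decrease (n : ℕ) (P : Set (EuclideanSpace ℝ (Fin n)))
    (hPc : IsCompact P) (hPconv : Convex ℝ P)
    (h : EuclideanSpace ℝ (Fin n) → ℝ)
    (g : EuclideanSpace ℝ (Fin n) → EuclideanSpace ℝ (Fin n))
    (hdiff : Differentiable ℝ h) (hgrad : ∀ x, HasGradientAt h (g x) x)
    (μ L D ρ : ℝ) (hμ : 0 < μ) (hL : 0 < L) (hD : 0 < D) (hρ : 0 < ρ)
    (hsmooth : ∀ x y, h y ≤ h x + ⟪g x, y - x⟫ + (L / 2) * ‖y - x‖ ^ 2)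
    (hsc : ∀ x y, h y ≥ h x + ⟪g x, y - x⟫ + (μ / 2) * ‖y - x‖ ^ 2)
    (hdiam : ∀ x ∈ P, ∀ y ∈ P, ‖x - y‖ ≤ D)
    (z xstar : EuclideanSpace ℝ (Fin n)) (hz : z ∈ P) (hx : xstar ∈ P)
    (hmin : ∀ x ∈ P, h xstar ≤ h x) (hne : z ≠ xstar)
    (d : EuclideanSpace ℝ (Fin n)) (hdD : ‖d‖ ≤ D) (hdesc : 0 ≤ ⟪-g z, d⟫)
    (hdir : ⟪-g z, d⟫ ≥ (ρ / 2) * ⟪-g z, ‖xstar - z‖⁻¹ • (xstar - z)⟫)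
    (zplus : EuclideanSpace ℝ (Fin n))
    (hls : ∀ γ : ℝ, 0 ≤ γ → h zplus ≤ h (z + γ • d)) :
    h zplus - h xstar ≤ (1 - (ρ / D) ^ 2 * (μ / (4 * L))) * (h z - h xstar) := by
  have hr0 : xstar - z ≠ 0 := sub_ne_zero.mpr (Ne.symm hne)
  have hrpos : (0:ℝ) < ‖xstar - z‖ := norm_pos_iff.mpr hr0
  set r : ℝ := ‖xstar - z‖ with hr
  set t : ℝ := ⟪-g z, xstar - z⟫ with ht
  set a : ℝ := ⟪-g z, d⟫ with ha
  set gap : ℝ := h z - h xstar with hgapdef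
  have hgap0 : 0 ≤ gap := sub_nonneg.mpr (hmin z hz)
  have hinner : ⟪g z, xstar - z⟫ = -t := by
    rw [ht, inner_neg_left]; ring
  have hsc1 : gap ≤ t - μ/2 * r^2 := by
    have := hsc z xstar
    rw [hinner] at this
    simp only [hgapdef, hr]
    linarith
  have hdir' : a ≥ ρ/2 * (r⁻¹ * t) := by
    have := hdir
    rwa [real_inner_smul_right] at this
  have htpos : 0 < t := by nlinarith [mul_pos hμ (pow_pos hrpos 2)]
  have hd0 : d ≠ 0 := by
    intro hd
    have : a = 0 := by simp [ha, hd]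
    have h1 : 0 < ρ/2 * (r⁻¹ * t) := by positivity
    linarith
  have hndpos : (0:ℝ) < ‖d‖ := norm_pos_iff.mpr hd0
  set nd : ℝ := ‖d‖ with hnd
  set γ : ℝ := a / (L * nd^2) with hγ
  have hγ0 : 0 ≤ γ := by positivity
  have hstep : h zplus ≤ h z - a^2 / (2 * L * nd^2) := by
    have h1 := hls γ hγ0
    have h2 := hsmooth z (z + γ • d)
    have h3 : z + γ • d - z = γ • d := add_sub_cancel_left z _
    rw [h3, real_inner_smul_right, norm_smul] at h2
    have h4 : ⟪g z, d⟫ = -a := by rw [ha, inner_neg_left]; ring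
    rw [h4] at h2
    have h5 : ‖γ‖ = γ := abs_of_nonneg hγ0
    rw [h5] at h2
    have h6 : γ * -a + L / 2 * (γ * nd)^2 = - (a^2 / (2 * L * nd^2)) := by
      rw [hγ]; field_simp; ring
    calc h zplus ≤ h (z + γ • d) := h1
      _ ≤ h z + (γ * -a + L / 2 * (γ * nd)^2) := by linarith
      _ = h z - a^2 / (2 * L * nd^2) := by rw [h6]; ring
  -- key inequalities
  have hkey1 : t^2 ≥ 2 * μ * r^2 * gap := by
    have h0 : (0:ℝ) ≤ 2 * μ * r^2 := by positivity
    have := mul_le_mul_of_nonneg_left hsc1 h0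
    nlinarith [sq_nonneg (t - μ * r^2)]
  have hkey2 : a^2 * r^2 ≥ ρ^2 / 4 * t^2 := by
    have h1 : a * r ≥ ρ/2 * t := by
      have := mul_le_mul_of_nonneg_right hdir' (le_of_lt hrpos)
      calc ρ/2 * t = ρ/2 * (r⁻¹ * t) * r := by field_simp
        _ ≤ a * r := this
    have h2 : (ρ/2*t)^2 ≤ (a*r)^2 := pow_le_pow_left₀ (by positivity) h1 2
    nlinarith [h2]
  have hkey3 : a^2 ≥ ρ^2 * μ / 2 * gap := by
    have h0 : (0:ℝ) ≤ ρ^2/4 := by positivity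
    have h3 := mul_le_mul_of_nonneg_left hkey1 h0
    have A : ρ^2 * μ / 2 * gap * r^2 ≤ a^2 * r^2 := by nlinarith
    exact le_of_mul_le_mul_right A (pow_pos hrpos 2)
  have hnd2 : nd^2 ≤ D^2 := by nlinarith
  have hfrac : ρ^2 * μ * gap / (4 * L * D^2) ≤ a^2 / (2 * L * nd^2) := by
    rw [div_le_div_iff₀ (by positivity) (by positivity)]
    have F1 : ρ^2*μ/2*gap * (4*L*D^2) ≤ a^2*(4*L*D^2) :=
      mul_le_mul_of_nonneg_right hkey3 (by positivity)
    have F2 : 2*L*(ρ^2*μ*gap) * nd^2 ≤ 2*L*(ρ^2*μ*gap) * D^2 :=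
      mul_le_mul_of_nonneg_left hnd2 (by positivity)
    clear_value a gap nd
    linarith
  have hrw : (1 - (ρ / D) ^ 2 * (μ / (4 * L))) * gap = gap - ρ^2 * μ * gap / (4 * L * D^2) := by
    field_simp
  rw [hrw]
  linarith
end
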